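/- arXiv:2505.03955 — 2 statements merged into one kernel-verified Lean document; each statement's English description precedes it below -/
import Mathlib

section
/- Let S be a real m × n matrix, let W be a symmetric positive definite real n × n matrix such that S W⁻¹ Sᵀ is invertible, let ŷ ∈ ℝⁿ and b ∈ ℝᵐ. Then the vector ỹ = ŷ − W⁻¹ Sᵀ (S W⁻¹ Sᵀ)⁻¹ (S ŷ − b) is the unique minimizer of the quadratic loss Q(y) = (y − ŷ)ᵀ W (y − ŷ) over the affine set {y ∈ ℝⁿ : S y = b}; that is, S ỹ = b, and Q(ỹ) < Q(y) for every y ≠ ỹ with S y = b. -/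
open Matrix

/-! The correction `W⁻¹ Sᵀ (S W⁻¹ Sᵀ)⁻¹ (S ŷ - b)` is built from a right inverse of `S`, so `ỹ` is
feasible, and `W (ỹ - ŷ)` lies in the range of `Sᵀ` (the Lagrange condition). Hence for feasible
`y` the step `d = y - ỹ` lies in `ker S`, which is `W`-orthogonal to `ỹ - ŷ`, and Pythagoras gives
`Q y = Q ỹ + dᵀ W d > Q ỹ` whenever `d ≠ 0`. -/

namespace Matrix

variable {ι κ R : Type*} [Fintype ι] [Fintype κ]

lemma mul_mul_nonsing_inv_of_isUnit [CommRing R] [DecidableEq κ] (S : Matrix κ ι R)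
    (M : Matrix ι κ R) (h : IsUnit (S * M)) : S * (M * (S * M)⁻¹) = 1 := by
  rw [← Matrix.mul_assoc, mul_nonsing_inv _ ((isUnit_iff_isUnit_det _).mp h)]

lemma mulVec_sub_mulVec_mulVec_sub_of_mul_eq_one [Ring R] [DecidableEq κ] {S : Matrix κ ι R}
    {A : Matrix ι κ R} (hSA : S * A = 1) (y : ι → R) (b : κ → R) :
    S *ᵥ (y - A *ᵥ (S *ᵥ y - b)) = b := by
  rw [mulVec_sub, mulVec_mulVec, hSA, one_mulVec, sub_sub_cancel]

lemma IsSymm.dotProduct_mulVec_add_of_dotProduct_mulVec_eq_zero [CommRing R]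
    {W : Matrix ι ι R} (hW : W.IsSymm) {d e : ι → R} (h : d ⬝ᵥ (W *ᵥ e) = 0) :
    (d + e) ⬝ᵥ (W *ᵥ (d + e)) = d ⬝ᵥ (W *ᵥ d) + e ⬝ᵥ (W *ᵥ e) := by
  have h' : e ⬝ᵥ (W *ᵥ d) = 0 := by
    rw [dotProduct_mulVec, ← hW.eq, vecMul_transpose, dotProduct_comm, h]
  simp only [mulVec_add, dotProduct_add, add_dotProduct, h, h']
  ring

lemma PosDef.dotProduct_mulVec_sub_lt_of_mulVec_sub_eq_transpose_mulVec
    {S : Matrix κ ι ℝ} {W : Matrix ι ι ℝ} (hW : W.PosDef) {x₀ ŷ y : ι → ℝ} {μ : κ → ℝ}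
    (hμ : W *ᵥ (x₀ - ŷ) = Sᵀ *ᵥ μ) (hy : S *ᵥ y = S *ᵥ x₀) (hne : y ≠ x₀) :
    (x₀ - ŷ) ⬝ᵥ (W *ᵥ (x₀ - ŷ)) < (y - ŷ) ⬝ᵥ (W *ᵥ (y - ŷ)) := by
  have hker : S *ᵥ (y - x₀) = 0 := by rw [mulVec_sub, hy, sub_self]
  have horth : (y - x₀) ⬝ᵥ (W *ᵥ (x₀ - ŷ)) = 0 := by
    rw [hμ, dotProduct_mulVec, vecMul_transpose, hker, zero_dotProduct]
  have hsymm : W.IsSymm := isHermitian_iff_isSymm.mp hW.isHermitian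
  have hpos : 0 < (y - x₀) ⬝ᵥ (W *ᵥ (y - x₀)) := hW.dotProduct_mulVec_pos (sub_ne_zero.mpr hne)
  calc (x₀ - ŷ) ⬝ᵥ (W *ᵥ (x₀ - ŷ))
      < (y - x₀) ⬝ᵥ (W *ᵥ (y - x₀)) + (x₀ - ŷ) ⬝ᵥ (W *ᵥ (x₀ - ŷ)) := lt_add_of_pos_left _ hpos
    _ = (y - ŷ) ⬝ᵥ (W *ᵥ (y - ŷ)) := by
      rw [← hsymm.dotProduct_mulVec_add_of_dotProduct_mulVec_eq_zero horth, sub_add_sub_cancel]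

end Matrix

theorem mint_closed_form_unique_minimizer_general
    {m n : ℕ} (S : Matrix (Fin m) (Fin n) ℝ) (W : Matrix (Fin n) (Fin n) ℝ)
    (hWpd : W.PosDef)
    (hInv : IsUnit (S * W⁻¹ * Sᵀ))
    (yhat : Fin n → ℝ) (b : Fin m → ℝ) :
    S *ᵥ (yhat - (W⁻¹ * Sᵀ * (S * W⁻¹ * Sᵀ)⁻¹) *ᵥ (S *ᵥ yhat - b)) = b ∧
    ∀ y : Fin n → ℝ, S *ᵥ y = b →
      y ≠ yhat - (W⁻¹ * Sᵀ * (S * W⁻¹ * Sᵀ)⁻¹) *ᵥ (S *ᵥ yhat - b) →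
      ((yhat - (W⁻¹ * Sᵀ * (S * W⁻¹ * Sᵀ)⁻¹) *ᵥ (S *ᵥ yhat - b)) - yhat) ⬝ᵥ
          (W *ᵥ ((yhat - (W⁻¹ * Sᵀ * (S * W⁻¹ * Sᵀ)⁻¹) *ᵥ (S *ᵥ yhat - b)) - yhat)) <
        (y - yhat) ⬝ᵥ (W *ᵥ (y - yhat)) := by
  have hSA : S * (W⁻¹ * Sᵀ * (S * W⁻¹ * Sᵀ)⁻¹) = 1 := by
    simpa only [Matrix.mul_assoc] using
      mul_mul_nonsing_inv_of_isUnit S (W⁻¹ * Sᵀ) (by simpa only [Matrix.mul_assoc] using hInv)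
  have hfeas := mulVec_sub_mulVec_mulVec_sub_of_mul_eq_one hSA yhat b
  have hlagrange : W *ᵥ ((yhat - (W⁻¹ * Sᵀ * (S * W⁻¹ * Sᵀ)⁻¹) *ᵥ (S *ᵥ yhat - b)) - yhat) =
      Sᵀ *ᵥ -((S * W⁻¹ * Sᵀ)⁻¹ *ᵥ (S *ᵥ yhat - b)) := by
    rw [sub_sub_cancel_left, mulVec_neg, mulVec_neg, mulVec_mulVec, mulVec_mulVec,
      Matrix.mul_assoc, mul_nonsing_inv_cancel_left _ _ ((isUnit_iff_isUnit_det _).mp hWpd.isUnit)]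
  exact ⟨hfeas, fun y hy hne =>
    hWpd.dotProduct_mulVec_sub_lt_of_mulVec_sub_eq_transpose_mulVec hlagrange
      (hy.trans hfeas.symm) hne⟩

/-- For an `m × n` real matrix `S`, a symmetric positive definite `n × n`
matrix `W` with `S W⁻¹ Sᵀ` invertible, base forecast `yhat` and targets `b`, the vector
`ytilde = yhat − W⁻¹ Sᵀ (S W⁻¹ Sᵀ)⁻¹ (S yhat − b)` is the unique minimizer of the
quadratic loss `Q y = (y − yhat)ᵀ W (y − yhat)` over `{y : S y = b}`: it is feasible
and strictly beats every other feasible point. -/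
theorem mint_closed_form_unique_minimizer
    {m n : ℕ} (S : Matrix (Fin m) (Fin n) ℝ) (W : Matrix (Fin n) (Fin n) ℝ)
    (hWsymm : W.IsSymm) (hWpd : W.PosDef)
    (hInv : IsUnit (S * W⁻¹ * Sᵀ))
    (yhat : Fin n → ℝ) (b : Fin m → ℝ) :
    S *ᵥ (yhat - (W⁻¹ * Sᵀ * (S * W⁻¹ * Sᵀ)⁻¹) *ᵥ (S *ᵥ yhat - b)) = b ∧
    ∀ y : Fin n → ℝ, S *ᵥ y = b →
      y ≠ yhat - (W⁻¹ * Sᵀ * (S * W⁻¹ * Sᵀ)⁻¹) *ᵥ (S *ᵥ yhat - b) →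
      ((yhat - (W⁻¹ * Sᵀ * (S * W⁻¹ * Sᵀ)⁻¹) *ᵥ (S *ᵥ yhat - b)) - yhat) ⬝ᵥ
          (W *ᵥ ((yhat - (W⁻¹ * Sᵀ * (S * W⁻¹ * Sᵀ)⁻¹) *ᵥ (S *ᵥ yhat - b)) - yhat)) <
        (y - yhat) ⬝ᵥ (W *ᵥ (y - yhat)) :=
  mint_closed_form_unique_minimizer_general S W hWpd hInv yhat b
end

section
/- Let I be a finite set, F ⊆ I a nonempty subset, a : I → ℝ, c ∈ ℝ, and p > 1 a real number. Let Δ = c − ∑_{j ∈ F} a_j. Then the function x ↦ ∑_{i ∈ I} |x_i − a_i|^p has a unique minimizer over the affine set {x : I → ℝ | ∑_{i ∈ F} x_i = c}, given by x*_i = a_i + Δ/|F| for i ∈ F and x*_i = a_i for i ∉ F. -/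
/-!
Writing `d i = y i - a i`, the constraint says `∑_{i ∈ F} d i = Δ` while the coordinates off `F`
are free. Jensen's inequality for the strictly convex function `|t| ^ p` bounds `∑_{i ∈ F} |d i| ^ p`
below by `|F| * |Δ / |F|| ^ p`, the value attained by the equal split, with equality only when all
`d i` (`i ∈ F`) agree; the terms off `F` are nonnegative and vanish only when `d i = 0`.
-/

open scoped Finset

theorem strictConvexOn_norm_rpow {E : Type*} [NormedAddCommGroup E] [NormedSpace ℝ E]
    [StrictConvexSpace ℝ E] {p : ℝ} (hp : 1 < p) :
    StrictConvexOn ℝ Set.univ (fun x : E => ‖x‖ ^ p) := by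
  refine ⟨convex_univ, fun x _ y _ hxy a b ha hb hab => ?_⟩
  simp only [smul_eq_mul]
  by_cases hnorm : ‖x‖ = ‖y‖
  · calc ‖a • x + b • y‖ ^ p < ‖y‖ ^ p :=
          Real.rpow_lt_rpow (norm_nonneg _)
            (norm_combo_lt_of_ne hnorm.le le_rfl hxy ha hb hab) (by linarith)
      _ = a * ‖x‖ ^ p + b * ‖y‖ ^ p := by rw [hnorm, ← add_mul, hab, one_mul]
  · have htriangle : ‖a • x + b • y‖ ≤ a * ‖x‖ + b * ‖y‖ := by
      simpa only [norm_smul_of_nonneg ha.le, norm_smul_of_nonneg hb.le]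
        using norm_add_le (a • x) (b • y)
    calc ‖a • x + b • y‖ ^ p ≤ (a * ‖x‖ + b * ‖y‖) ^ p :=
          Real.rpow_le_rpow (norm_nonneg _) htriangle (by linarith)
      _ < a * ‖x‖ ^ p + b * ‖y‖ ^ p :=
          (strictConvexOn_rpow hp).2 (norm_nonneg x) (norm_nonneg y) hnorm ha hb hab

theorem strictConvexOn_abs_rpow {p : ℝ} (hp : 1 < p) :
    StrictConvexOn ℝ Set.univ (fun t : ℝ => |t| ^ p) := by
  simpa only [Real.norm_eq_abs] using strictConvexOn_norm_rpow (E := ℝ) hp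

section UniformJensen

variable {ι E : Type*} [AddCommGroup E] [Module ℝ E] {D : Set E} {f : E → ℝ} {s : Finset ι}
  {x : ι → E}

theorem ConvexOn.card_mul_map_average_le (hf : ConvexOn ℝ D f) (hs : s.Nonempty)
    (hx : ∀ i ∈ s, x i ∈ D) :
    #s * f ((#s : ℝ)⁻¹ • ∑ i ∈ s, x i) ≤ ∑ i ∈ s, f (x i) := by
  have hcard : (0 : ℝ) < #s := by exact_mod_cast hs.card_pos
  have hjensen := hf.map_sum_le (t := s) (w := fun _ => (#s : ℝ)⁻¹) (p := x)
    (fun _ _ => by positivity) (by simp [hcard.ne']) hx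
  rw [← Finset.smul_sum, ← Finset.smul_sum, smul_eq_mul] at hjensen
  calc #s * f ((#s : ℝ)⁻¹ • ∑ i ∈ s, x i) ≤ #s * ((#s : ℝ)⁻¹ * ∑ i ∈ s, f (x i)) :=
        mul_le_mul_of_nonneg_left hjensen hcard.le
    _ = ∑ i ∈ s, f (x i) := by field_simp

theorem StrictConvexOn.eq_average_of_sum_map_le (hf : StrictConvexOn ℝ D f)
    (hx : ∀ i ∈ s, x i ∈ D)
    (hle : ∑ i ∈ s, f (x i) ≤ #s * f ((#s : ℝ)⁻¹ • ∑ i ∈ s, x i)) :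
    ∀ i ∈ s, x i = (#s : ℝ)⁻¹ • ∑ j ∈ s, x j := by
  intro i hi
  have hcard : (0 : ℝ) < #s := by exact_mod_cast Finset.card_pos.mpr ⟨i, hi⟩
  have hall_eq := hf.eq_of_le_map_sum (t := s) (w := fun _ => (#s : ℝ)⁻¹) (p := x)
    (fun _ _ => by positivity) (by simp [hcard.ne']) hx (by
      rw [← Finset.smul_sum, ← Finset.smul_sum, smul_eq_mul]
      calc (#s : ℝ)⁻¹ * ∑ i ∈ s, f (x i) ≤ (#s : ℝ)⁻¹ * (#s * f ((#s : ℝ)⁻¹ • ∑ i ∈ s, x i)) :=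
            mul_le_mul_of_nonneg_left hle (by positivity)
        _ = _ := by field_simp)
  rw [Finset.sum_congr rfl fun j hj => hall_eq hj hi, Finset.sum_const, ← Nat.cast_smul_eq_nsmul ℝ,
    smul_smul, inv_mul_cancel₀ hcard.ne', one_smul]

end UniformJensen

theorem eq_zero_of_sum_abs_rpow_nonpos {ι : Type*} {s : Finset ι} {d : ι → ℝ} {p : ℝ}
    (hp : p ≠ 0) (hsum : ∑ i ∈ s, |d i| ^ p ≤ 0) : ∀ i ∈ s, d i = 0 := by
  intro i hi
  have hterm := (Finset.sum_eq_zero_iff_of_nonneg fun j _ => by positivity).mp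
    (hsum.antisymm (by positivity)) i hi
  simpa using (Real.rpow_eq_zero (abs_nonneg _) hp).mp hterm

/-- The incremental update: distribute the mismatch `Δ = c − ∑_{j ∈ F} a j` equally
over the affected indices `F`, leaving the others unchanged. -/
noncomputable def incrementalUpdate {I : Type*} [DecidableEq I]
    (F : Finset I) (a : I → ℝ) (c : ℝ) : I → ℝ :=
  fun i => if i ∈ F then a i + (c - ∑ j ∈ F, a j) / F.card else a i

section IncrementalUpdate

variable {I : Type*} [DecidableEq I] {F : Finset I} {a : I → ℝ} {c : ℝ}

theorem incrementalUpdate_sub_self (i : I) :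
    incrementalUpdate F a c i - a i = if i ∈ F then (c - ∑ j ∈ F, a j) / #F else 0 := by
  unfold incrementalUpdate
  split_ifs <;> ring

theorem sum_incrementalUpdate (hF : F.Nonempty) : ∑ i ∈ F, incrementalUpdate F a c i = c := by
  have hcard : (#F : ℝ) ≠ 0 := by exact_mod_cast hF.card_pos.ne'
  have hon : ∀ i ∈ F, incrementalUpdate F a c i = a i + (c - ∑ j ∈ F, a j) / #F :=
    fun i hi => if_pos hi
  rw [Finset.sum_congr rfl hon, Finset.sum_add_distrib, Finset.sum_const,
    nsmul_eq_mul, mul_div_cancel₀ _ hcard]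
  ring

theorem sum_abs_incrementalUpdate_sub_rpow [Fintype I] {p : ℝ} (hp : p ≠ 0) :
    ∑ i, |incrementalUpdate F a c i - a i| ^ p = #F * |(c - ∑ j ∈ F, a j) / #F| ^ p := by
  simp only [incrementalUpdate_sub_self, apply_ite (fun t : ℝ => |t| ^ p), abs_zero,
    Real.zero_rpow hp, Finset.sum_ite_mem, Finset.univ_inter, Finset.sum_const, nsmul_eq_mul]

omit [DecidableEq I] in
theorem card_mul_abs_rpow_le_sum_abs_sub_rpow {p : ℝ} (hp : 1 < p) (hF : F.Nonempty)
    {y : I → ℝ} (hy : ∑ i ∈ F, y i = c) :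
    #F * |(c - ∑ j ∈ F, a j) / #F| ^ p ≤ ∑ i ∈ F, |y i - a i| ^ p := by
  have h := (strictConvexOn_abs_rpow hp).convexOn.card_mul_map_average_le hF
    (x := fun i => y i - a i) fun _ _ => Set.mem_univ _
  rwa [Finset.sum_sub_distrib, hy, smul_eq_mul, inv_mul_eq_div] at h

end IncrementalUpdate

/-- For a finite index set `I`, nonempty `F ⊆ I`, `a : I → ℝ`, `c ∈ ℝ`
and real `p > 1`, the map `x ↦ ∑ i, |x i − a i| ^ p` has a unique minimizer over
`{x : ∑_{i ∈ F} x i = c}`, namely `x* i = a i + Δ/|F|` on `F` and `x* i = a i`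
otherwise, where `Δ = c − ∑_{j ∈ F} a j`. -/
theorem incremental_update_unique_lp_minimizer
    {I : Type*} [Fintype I] [DecidableEq I]
    (F : Finset I) (hF : F.Nonempty) (a : I → ℝ) (c : ℝ) (p : ℝ) (hp : 1 < p) :
    (∑ i ∈ F, incrementalUpdate F a c i = c) ∧
    (∀ y : I → ℝ, (∑ i ∈ F, y i = c) →
        (∑ i, |incrementalUpdate F a c i - a i| ^ p) ≤ ∑ i, |y i - a i| ^ p) ∧
    (∀ x : I → ℝ, (∑ i ∈ F, x i = c) →
        (∀ y : I → ℝ, (∑ i ∈ F, y i = c) →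
            (∑ i, |x i - a i| ^ p) ≤ ∑ i, |y i - a i| ^ p) →
        x = incrementalUpdate F a c) := by
  have hp0 : p ≠ 0 := by positivity
  refine ⟨sum_incrementalUpdate hF, fun y hy => ?_, fun x hx hmin => ?_⟩
  · rw [sum_abs_incrementalUpdate_sub_rpow hp0]
    exact (card_mul_abs_rpow_le_sum_abs_sub_rpow hp hF hy).trans
      (Finset.sum_le_sum_of_subset_of_nonneg (Finset.subset_univ F) fun _ _ _ => by positivity)
  · have hle := hmin (incrementalUpdate F a c) (sum_incrementalUpdate hF)
    rw [sum_abs_incrementalUpdate_sub_rpow hp0, ← Finset.sum_compl_add_sum F] at hle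
    have hjensen := card_mul_abs_rpow_le_sum_abs_sub_rpow (a := a) hp hF hx
    have hcompl_nonneg : 0 ≤ ∑ i ∈ Fᶜ, |x i - a i| ^ p := by positivity
    have havg : (#F : ℝ)⁻¹ • ∑ i ∈ F, (x i - a i) = (c - ∑ j ∈ F, a j) / #F := by
      rw [Finset.sum_sub_distrib, hx, smul_eq_mul, inv_mul_eq_div]
    have hon := (strictConvexOn_abs_rpow hp).eq_average_of_sum_map_le (s := F)
      (x := fun i => x i - a i) (fun _ _ => Set.mem_univ _) (by rw [havg]; linarith)
    have hoff := eq_zero_of_sum_abs_rpow_nonpos (s := Fᶜ) (d := fun i => x i - a i) hp0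
      (by linarith)
    funext i
    rw [← sub_left_inj (a := a i), incrementalUpdate_sub_self]
    by_cases hi : i ∈ F
    · rw [if_pos hi, hon i hi, havg]
    · rw [if_neg hi, hoff i (Finset.mem_compl.mpr hi)]
end
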